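/- A direction (α, β) is available at a run π if and only if π contains two configurations (initstate(α), c₁) and (initstate(β), c₂), occurring in this order, such that c₁ ≥ drop(α) and c₂ + effect(α) ≥ drop(β). -/

import Mathlib

/-- A transition of a one-counter automaton without zero tests:
(source state, optional letter read, counter change, target state). -/
abbrev Tr (Q A : Type) : Type := Q × Option A × ℤ × Q

/-- Source state of a transition. -/
def Tr.src {Q A : Type} (t : Tr Q A) : Q := t.1
/-- Target state of a transition. -/
def Tr.tgt {Q A : Type} (t : Tr Q A) : Q := t.2.2.2
/-- Counter change of a transition. -/
def Tr.wt {Q A : Type} (t : Tr Q A) : ℤ := t.2.2.1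
/-- Letter (or ε) read by a transition. -/
def Tr.lab {Q A : Type} (t : Tr Q A) : Option A := t.2.1

/-- The effect of a walk on the counter: total counter change. -/
def effect {Q A : Type} (l : List (Tr Q A)) : ℤ := (l.map Tr.wt).sum

/-- The word read along a walk. -/
def word {Q A : Type} (l : List (Tr Q A)) : List A := l.filterMap Tr.lab

/-- A walk of the automaton M: a sequence of transitions of M with matching
intermediate states. -/
def IsWalk {Q A : Type} (M : Set (Tr Q A)) (l : List (Tr Q A)) : Prop :=
  (∀ t ∈ l, t ∈ M) ∧ l.Chain' (fun t t' => t.tgt = t'.src)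

/-- The state visited at position i (0 ≤ i ≤ length) of a walk starting at p. -/
def stateAt {Q A : Type} (p : Q) (l : List (Tr Q A)) (i : ℕ) : Q :=
  match (l.drop i).head? with
  | some t => t.src
  | none => (l.getLast?.map Tr.tgt).getD p

/-- The counter value at position i of a walk starting at counter value c. -/
def counterAt {Q A : Type} (c : ℤ) (l : List (Tr Q A)) (i : ℕ) : ℤ :=
  c + effect (l.take i)

/-- drop of a walk: the minimal counter value needed at its start so that the
counter stays nonnegative throughout (maximum over prefixes of minus the
prefix effect). -/
def dropVal {Q A : Type} (l : List (Tr Q A)) : ℤ :=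
  (l.inits.map fun pfx => -effect pfx).foldr max 0

/-- A valid run of M starting in configuration (p, c): a walk starting in
state p whose counter values all stay nonnegative. -/
def ValidFrom {Q A : Type} (M : Set (Tr Q A)) (p : Q) (c : ℤ) (l : List (Tr Q A)) : Prop :=
  IsWalk M l ∧ (∀ t ∈ l.head?, t.src = p) ∧ 0 ≤ c ∧
    ∀ i ≤ l.length, 0 ≤ counterAt c l i

/-- A walk of M from state p to state q. -/
def WalkFromTo {Q A : Type} (M : Set (Tr Q A)) (p : Q) (l : List (Tr Q A)) (q : Q) : Prop :=
  IsWalk M l ∧ (∀ t ∈ l.head?, t.src = p) ∧ (∀ t ∈ l.getLast?, t.tgt = q) ∧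
    (l = [] → p = q)

/-- A direction: a pair of anchored cycles (α at state p, β at state q). -/
structure Dir (Q A : Type) where
  p : Q
  al : List (Tr Q A)
  q : Q
  bl : List (Tr Q A)

/-- Insertion of a direction d into a run (given by its walk l starting at
state q0): there is a factorization l = l₁·l₂·l₃ such that the result is
l₁·α·l₂·β·l₃, with α inserted at an occurrence of state p and β at a later
occurrence of state q. -/
def Inserted {Q A : Type} (q0 : Q) (d : Dir Q A) (l l' : List (Tr Q A)) : Prop :=
  ∃ l₁ l₂ l₃ : List (Tr Q A), l = l₁ ++ l₂ ++ l₃ ∧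
    l' = l₁ ++ d.al ++ l₂ ++ d.bl ++ l₃ ∧
    stateAt q0 l l₁.length = d.p ∧
    stateAt q0 l (l₁.length + l₂.length) = d.q

/-- A direction of M: a pair of cycles (α on p, β on q) with
effect(α) ≥ 0 and effect(α) + effect(β) = 0. -/
def IsDir {Q A : Type} (M : Set (Tr Q A)) (d : Dir Q A) : Prop :=
  WalkFromTo M d.p d.al d.p ∧ WalkFromTo M d.q d.bl d.q ∧
  0 ≤ effect d.al ∧ effect d.al + effect d.bl = 0

section Helpers
variable {Q A : Type}

lemma effect_append (a b : List (Tr Q A)) : effect (a ++ b) = effect a + effect b := by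
  simp [effect]

/-- Counter-nonnegativity predicate. -/
def PNN (c : ℤ) (l : List (Tr Q A)) : Prop := ∀ k ≤ l.length, 0 ≤ c + effect (l.take k)

lemma PNN.mono {c c' : ℤ} {l : List (Tr Q A)} (h : PNN c l) (hcc : c ≤ c') : PNN c' l :=
  fun k hk => le_trans (h k hk) (by linarith)

lemma PNN_append {c : ℤ} {a b : List (Tr Q A)} :
    PNN c (a ++ b) ↔ PNN c a ∧ PNN (c + effect a) b := by
  constructor
  · intro h
    constructor
    · intro k hk
      have hh := h k (by simp; omega)
      rwa [List.take_append, Nat.sub_eq_zero_of_le hk, List.take_zero,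
        List.append_nil] at hh
    · intro k hk
      have hh := h (a.length + k) (by simp; omega)
      rwa [List.take_append, List.take_of_length_le (by omega),
        Nat.add_sub_cancel_left, effect_append, ← add_assoc] at hh
  · rintro ⟨h1, h2⟩ k hk
    rw [List.take_append, effect_append]
    rcases le_or_gt k a.length with hka | hka
    · rw [Nat.sub_eq_zero_of_le hka, List.take_zero]
      have h0 : effect ([] : List (Tr Q A)) = 0 := rfl
      rw [h0, add_zero]
      exact h1 k hka
    · rw [List.take_of_length_le (by omega)]
      have := h2 (k - a.length) (by simp at hk; omega)
      linarith

lemma foldr_max_le_iff {L : List ℤ} {x c : ℤ} :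
    L.foldr max x ≤ c ↔ x ≤ c ∧ ∀ a ∈ L, a ≤ c := by
  induction L with
  | nil => simp
  | cons a L ih => simp [max_le_iff, ih]; tauto

lemma dropVal_le_iff {w : List (Tr Q A)} {c : ℤ} : dropVal w ≤ c ↔ PNN c w := by
  rw [dropVal, foldr_max_le_iff]
  constructor
  · rintro ⟨_, h⟩ k _
    have : -effect (w.take k) ≤ c :=
      h _ (List.mem_map_of_mem ((List.mem_inits _ _).mpr (List.take_prefix k w)))
    linarith
  · intro h
    refine ⟨by simpa [effect] using h 0 (by simp), ?_⟩
    intro a ha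
    simp only [List.mem_map] at ha
    obtain ⟨pfx, hpfx, rfl⟩ := ha
    rw [List.mem_inits] at hpfx
    have h2 := h pfx.length hpfx.length_le
    rw [List.prefix_iff_eq_take] at hpfx
    rw [← hpfx] at h2
    linarith

/-- Chain-segment from state r to state s. -/
def Seg (r : Q) (a : List (Tr Q A)) (s : Q) : Prop :=
  a.Chain' (fun t t' => t.tgt = t'.src) ∧ (∀ t ∈ a.head?, t.src = r) ∧
    (∀ t ∈ a.getLast?, t.tgt = s) ∧ (a = [] → r = s)

lemma Seg.append {r s u : Q} {a b : List (Tr Q A)} (ha : Seg r a s) (hb : Seg s b u) :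
    Seg r (a ++ b) u := by
  obtain ⟨hc1, hh1, hl1, he1⟩ := ha
  obtain ⟨hc2, hh2, hl2, he2⟩ := hb
  refine ⟨?_, ?_, ?_, ?_⟩
  · exact List.isChain_append.mpr ⟨hc1, hc2, fun x hx y hy => (hl1 x hx).trans (hh2 y hy).symm⟩
  · intro t ht
    cases a with
    | nil =>
      simp only [List.nil_append] at ht
      rw [hh2 t ht, ← he1 rfl]
    | cons x xs =>
      simp only [List.cons_append, List.head?_cons, Option.mem_some_iff] at ht
      subst ht
      exact hh1 _ rfl
  · intro t ht
    by_cases hbnil : b = []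
    · subst hbnil
      rw [List.append_nil] at ht
      rw [hl1 t ht, he2 rfl]
    · rw [List.getLast?_append_of_ne_nil _ hbnil] at ht
      exact hl2 t ht
  · intro hnil
    rw [List.append_eq_nil_iff] at hnil
    exact (he1 hnil.1).trans (he2 hnil.2)

lemma stateAt_of_lt {p : Q} {l : List (Tr Q A)} {i : ℕ} (h : i < l.length) :
    stateAt p l i = (l[i]'h).src := by
  simp [stateAt, List.head?_drop, List.getElem?_eq_getElem h]

lemma stateAt_of_len {p : Q} {l : List (Tr Q A)} :
    stateAt p l l.length = (l.getLast?.map Tr.tgt).getD p := by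
  simp [stateAt]

lemma stateAt_zero {p : Q} {l : List (Tr Q A)} (h : ∀ t ∈ l.head?, t.src = p) :
    stateAt p l 0 = p := by
  cases l with
  | nil => simp [stateAt]
  | cons x xs => simpa [stateAt] using h x rfl

lemma seg_slice {p0 : Q} {l : List (Tr Q A)}
    (hc : l.Chain' (fun t t' => t.tgt = t'.src))
    {a b : ℕ} (hab : a ≤ b) (hb : b ≤ l.length) :
    Seg (stateAt p0 l a) ((l.take b).drop a) (stateAt p0 l b) := by
  have hlen : ((l.take b).drop a).length = b - a := by simp; omega
  refine ⟨?_, ?_, ?_, ?_⟩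
  · exact hc.infix (((l.take b).drop_suffix a).isInfix.trans (l.take_prefix b).isInfix)
  · intro t ht
    rw [List.head?_drop, List.getElem?_take] at ht
    split at ht
    · next hlt =>
      have halen : a < l.length := lt_of_lt_of_le hlt hb
      rw [List.getElem?_eq_getElem halen, Option.mem_some_iff] at ht
      subst ht
      rw [stateAt_of_lt halen]
    · simp at ht
  · intro t ht
    by_cases hab' : a < b
    · obtain ⟨m, rfl⟩ : ∃ m, b = m + 1 := ⟨b - 1, by omega⟩
      have e1 : a + (m + 1 - a - 1) = m := by omega
      rw [List.getLast?_eq_getElem?, hlen, List.getElem?_drop, List.getElem?_take,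
        if_pos (by omega), e1, List.getElem?_eq_getElem (by omega),
        Option.mem_some_iff] at ht
      subst ht
      rcases lt_or_eq_of_le hb with hblt | hbeq
      · rw [stateAt_of_lt hblt]
        have hch := List.isChain_iff_getElem.mp hc m (by omega)
        simpa using hch
      · have hs := stateAt_of_len (p := p0) (l := l)
        rw [← hbeq] at hs
        have e2 : l.length - 1 = m := by omega
        rw [hs, List.getLast?_eq_getElem?, e2, List.getElem?_eq_getElem (by omega)]
        simp
    · have hnil : (l.take b).drop a = [] := List.eq_nil_of_length_eq_zero (by omega)
      rw [hnil] at ht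
      simp at ht
  · intro hnil
    have : a = b := by
      have := congrArg List.length hnil
      rw [hlen] at this
      simp at this
      omega
    rw [this]

end Helpers

/-- Characterization of availability: a direction (α, β) is available at a run
π (i.e. some insertion of α and β into π yields a valid run) if and only if π
contains two configurations (initstate(α), c₁) and (initstate(β), c₂), in this
order, with c₁ ≥ drop(α) and c₂ + effect(α) ≥ drop(β). -/
theorem avail_characterization {Q A : Type} (M : Set (Tr Q A))
    (p0 : Q) (c0 : ℤ) (l : List (Tr Q A)) (d : Dir Q A)
    (hrun : ValidFrom M p0 c0 l) (hd : IsDir M d) :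
    (∃ l', Inserted p0 d l l' ∧ ValidFrom M p0 c0 l') ↔
      ∃ i j : ℕ, i ≤ j ∧ j ≤ l.length ∧
        stateAt p0 l i = d.p ∧ stateAt p0 l j = d.q ∧
        dropVal d.al ≤ counterAt c0 l i ∧
        dropVal d.bl ≤ counterAt c0 l j + effect d.al := by
  obtain ⟨⟨hMl, hcl⟩, hhl, hc0, hcnt⟩ := hrun
  obtain ⟨⟨⟨hMα, hcα⟩, hhα, hlα, heα⟩, ⟨⟨hMβ, hcβ⟩, hhβ, hlβ, heβ⟩, heffα, heffαβ⟩ := hd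
  constructor
  · rintro ⟨l', ⟨l₁, l₂, l₃, hl, hl', hs1, hs2⟩, hv⟩
    have hP : PNN c0 l' := fun k hk => hv.2.2.2 k hk
    rw [hl', PNN_append, PNN_append, PNN_append, PNN_append] at hP
    obtain ⟨⟨⟨⟨h1, h2⟩, h3⟩, h4⟩, h5⟩ := hP
    have htake1 : l.take l₁.length = l₁ := by
      rw [hl, List.append_assoc, List.take_left]
    have htake2 : l.take (l₁.length + l₂.length) = l₁ ++ l₂ := by
      rw [hl, ← List.length_append, List.take_left]
    refine ⟨l₁.length, l₁.length + l₂.length, Nat.le_add_right _ _, ?_, hs1, hs2, ?_, ?_⟩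
    · rw [hl]
      simp [List.length_append]
    · simp only [counterAt]
      rw [htake1]
      exact dropVal_le_iff.mpr h2
    · simp only [counterAt]
      rw [htake2, effect_append]
      have hβ := dropVal_le_iff.mpr h4
      simp only [effect_append] at hβ
      linarith
  · rintro ⟨i, j, hij, hjlen, hsp, hsq, hca, hcb⟩
    have hilen : (l.take i).length = i := by rw [List.length_take]; omega
    have hjilen : ((l.take j).drop i).length = j - i := by simp; omega
    have htj : l.take j = l.take i ++ (l.take j).drop i := by
      conv_lhs => rw [← List.take_append_drop i (l.take j)]
      rw [List.take_take]
      congr 2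
      omega
    have hdecomp : l = l.take i ++ (l.take j).drop i ++ l.drop j := by
      rw [← htj, List.take_append_drop]
    have s0 : stateAt p0 l 0 = p0 := stateAt_zero hhl
    have seg1 : Seg p0 (l.take i) d.p := by
      have h := seg_slice (p0 := p0) hcl (Nat.zero_le i) (le_trans hij hjlen)
      rwa [s0, hsp, List.drop_zero] at h
    have seg2 : Seg d.p ((l.take j).drop i) d.q := by
      have h := seg_slice (p0 := p0) hcl hij hjlen
      rwa [hsp, hsq] at h
    have seg3 : Seg d.q (l.drop j) (stateAt p0 l l.length) := by
      have h := seg_slice (p0 := p0) hcl hjlen (le_refl _)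
      rwa [hsq, List.take_length] at h
    have segα : Seg d.p d.al d.p := ⟨hcα, hhα, hlα, heα⟩
    have segβ : Seg d.q d.bl d.q := ⟨hcβ, hhβ, hlβ, heβ⟩
    have segAll := (((seg1.append segα).append seg2).append segβ).append seg3
    refine ⟨l.take i ++ d.al ++ (l.take j).drop i ++ d.bl ++ l.drop j,
      ⟨l.take i, (l.take j).drop i, l.drop j, hdecomp, rfl, ?_, ?_⟩, ⟨?_, segAll.1⟩,
      segAll.2.1, hc0, ?_⟩
    · rw [hilen]
      exact hsp
    · rw [hilen, hjilen]
      have e : i + (j - i) = j := by omega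
      rw [e]
      exact hsq
    · intro t ht
      simp only [List.mem_append] at ht
      rcases ht with ((((ht | ht) | ht) | ht) | ht)
      · exact hMl t (List.take_subset _ _ ht)
      · exact hMα t ht
      · exact hMl t (List.take_subset _ _ (List.drop_subset _ _ ht))
      · exact hMβ t ht
      · exact hMl t (List.drop_subset _ _ ht)
    · show PNN c0 _
      have hP : PNN c0 l := fun k hk => hcnt k hk
      rw [hdecomp, PNN_append, PNN_append] at hP
      obtain ⟨⟨P1, P2⟩, P3⟩ := hP
      simp only [effect_append] at P3
      have hcj : counterAt c0 l j = c0 + (effect (l.take i) + effect ((l.take j).drop i)) := by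
        show c0 + effect (l.take j) = _
        conv_lhs => rw [htj]
        rw [effect_append]
      rw [hcj] at hcb
      have hci : counterAt c0 l i = c0 + effect (l.take i) := rfl
      rw [hci] at hca
      rw [PNN_append, PNN_append, PNN_append, PNN_append]
      simp only [effect_append]
      refine ⟨⟨⟨⟨P1, ?_⟩, ?_⟩, ?_⟩, ?_⟩
      · exact dropVal_le_iff.mp hca
      · exact P2.mono (by linarith)
      · refine dropVal_le_iff.mp (le_trans hcb ?_)
        linarith
      · refine P3.mono ?_
        linarith
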